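/- Let f be a Fibonacci map. Then for every n ≥ 2, the point d_n = f^{S_n}(c) lies in U^{n−1} but not in U^n; equivalently, |u_n| < |d_n| < |u_{n−1}|. -/

import Mathlib

noncomputable section

/-- The Fibonacci numbers `S 0 = 1`, `S 1 = 2`, `S (k+2) = S (k+1) + S k`. -/
def fibS : ℕ → ℕ
  | 0 => 1
  | 1 => 2
  | n + 2 => fibS (n + 1) + fibS n

/-- `f : [0,1] → [0,1]` is unimodal with critical point `c`: continuous, maps `[0,1]` into
itself, `f 0 = f 1 = 0`, `c ∈ (0,1)`, strictly increasing on `[0,c]`, strictly decreasing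
on `[c,1]`. -/
def IsUnimodal (f : ℝ → ℝ) (c : ℝ) : Prop :=
  ContinuousOn f (Set.Icc 0 1) ∧ Set.MapsTo f (Set.Icc 0 1) (Set.Icc 0 1) ∧
  f 0 = 0 ∧ f 1 = 0 ∧ c ∈ Set.Ioo (0 : ℝ) 1 ∧
  StrictMonoOn f (Set.Icc 0 c) ∧ StrictAntiOn f (Set.Icc c 1)

/-- `f` is symmetric about `c`: `f (2c - x) = f x` whenever both points lie in `[0,1]`
(the symmetric point of `x` is `x̂ = 2c - x`). -/
def SymmetricAbout (f : ℝ → ℝ) (c : ℝ) : Prop :=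
  ∀ x ∈ Set.Icc (0 : ℝ) 1, 2 * c - x ∈ Set.Icc (0 : ℝ) 1 → f (2 * c - x) = f x

/-- The distance from `c` to a nearest `k`-th preimage `c₋ₖ` of `c` in `[0,1]`,
i.e. `|c₋ₖ - c| = |c₋ₖ|`. -/
def preimDist (f : ℝ → ℝ) (c : ℝ) (k : ℕ) : ℝ :=
  sInf ((fun x => |x - c|) '' {x | x ∈ Set.Icc (0 : ℝ) 1 ∧ f^[k] x = c})

/-- `S` is the sequence of cutting times of `f`: `S 0 = 1`, and `S (i+1)` is the least
`k ≥ S i` for which the nearest `k`-th preimage `c₋ₖ` of `c` lies in the symmetric open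
interval `(c₋ₛᵢ, (c₋ₛᵢ)^)`, i.e. `c₋ₖ` exists and is strictly closer to `c` than `c₋ₛᵢ`. -/
def IsCuttingSeq (f : ℝ → ℝ) (c : ℝ) (S : ℕ → ℕ) : Prop :=
  S 0 = 1 ∧ ∀ i, IsLeast {k | S i ≤ k ∧
    ({x | x ∈ Set.Icc (0 : ℝ) 1 ∧ f^[k] x = c}).Nonempty ∧
    preimDist f c k < preimDist f c (S i)} (S (i + 1))

/-- A Fibonacci map: a symmetric unimodal map whose cutting times are exactly the
Fibonacci numbers `1, 2, 3, 5, 8, …`. -/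
def IsFibonacciMap (f : ℝ → ℝ) (c : ℝ) : Prop :=
  IsUnimodal f c ∧ SymmetricAbout f c ∧ IsCuttingSeq f c fibS

/-!
Write `ρ n` for the distance from `c` to the nearest `S n`-th preimage of `c`; by symmetry both
`c ± ρ n` are such preimages. By the definition of the cutting times no `j`-th preimage of `c`
with `j < S (n+1)` is closer to `c` than `ρ n`, so `f^[S (n+1)]` is injective, hence strictly
monotone, on `[c, c + ρ n]`, and it returns to `c` there only at `c + ρ (n+1)`. Since
`S n + S (n+1) = S (n+2)`, images of the points `c ± ρ` under such iterates are again preimages of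
`c`, and comparing values on either side of the return gives `ρ n < |d (n+1)|` and
`|d (n+2)| < ρ n`. The same comparison, run by induction along the chain `u`, yields
`ρ (n+1) < |u (n+1)| < ρ n`; hence `|u n| < ρ (n-1) < |d n|`, and one more comparison, on
`[c + ρ n, c + ρ (n-1)]`, gives `|d n| < |u (n-1)|`.
-/

open Set Function

theorem fibS_pos : ∀ n, 0 < fibS n
  | 0 => Nat.one_pos
  | 1 => Nat.two_pos
  | n + 2 => Nat.add_pos_left (fibS_pos (n + 1)) _

theorem fibS_strictMono : StrictMono fibS :=
  strictMono_nat_of_lt_succ fun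
    | 0 => Nat.one_lt_two
    | n + 1 => Nat.lt_add_of_pos_right (fibS_pos n)

theorem fibS_add_fibS_succ (n : ℕ) : fibS n + fibS (n + 1) = fibS (n + 2) :=
  Nat.add_comm _ _

theorem iterate_fibS_iterate_fibS_succ {α : Type*} (f : α → α) (n : ℕ) (x : α) :
    f^[fibS n] (f^[fibS (n + 1)] x) = f^[fibS (n + 2)] x := by
  rw [← iterate_add_apply, fibS_add_fibS_succ]

theorem mem_uIoo_two_mul_sub_iff {a c x : ℝ} : x ∈ uIoo a (2 * c - a) ↔ |x - c| < |a - c| := by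
  rw [abs_sub_lt_iff]
  rcases le_total a c with h | h
  · rw [uIoo_of_le (by linarith), abs_of_nonpos (by linarith), mem_Ioo]
    constructor <;> rintro ⟨h₁, h₂⟩ <;> constructor <;> linarith
  · rw [uIoo_of_ge (by linarith), abs_of_nonneg (by linarith), mem_Ioo]
    constructor <;> rintro ⟨h₁, h₂⟩ <;> constructor <;> linarith

theorem mem_uIcc_of_mul_pos_of_abs_sub_le {c d z : ℝ} (hside : 0 < (z - c) * (d - c))
    (hz : |z - c| ≤ |d - c|) : z ∈ uIcc c d := by
  rcases pos_and_pos_or_neg_and_neg_of_mul_pos hside with ⟨hz₀, hd₀⟩ | ⟨hz₀, hd₀⟩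
  · rw [abs_of_pos hz₀, abs_of_pos hd₀] at hz
    exact mem_uIcc_of_le (by linarith) (by linarith)
  · rw [abs_of_neg hz₀, abs_of_neg hd₀] at hz
    exact mem_uIcc_of_ge (by linarith) (by linarith)

section MonotoneAbs

variable {φ : ℝ → ℝ} {a b y z : ℝ}

theorem ContinuousOn.mapsTo_Iic_or_Ici (hφ : ContinuousOn φ (Icc a b))
    (hy : ∀ x ∈ Icc a b, φ x = y → x = b) :
    MapsTo φ (Icc a b) (Iic y) ∨ MapsTo φ (Icc a b) (Ici y) := by
  rw [or_iff_not_imp_left]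
  simp only [MapsTo, mem_Iic, mem_Ici, not_forall, not_le]
  rintro ⟨x', hx', hyx'⟩ x hx
  by_contra! hxy
  obtain ⟨z, hz, hφz⟩ := intermediate_value_uIcc (hφ.mono (uIcc_subset_Icc hx hx'))
    (mem_uIcc_of_le hxy.le hyx'.le)
  obtain rfl := hy z (uIcc_subset_Icc hx hx' hz) hφz
  rcases le_sup_iff.1 hz.2 with hzx | hzx'
  · exact hxy.ne (le_antisymm hx.2 hzx ▸ hφz)
  · exact hyx'.ne' (le_antisymm hx'.2 hzx' ▸ hφz)

theorem strictAntiOn_abs_sub_of_apply_eq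
    (hφ : StrictMonoOn φ (Icc a b) ∨ StrictAntiOn φ (Icc a b)) (hz : z ∈ Icc a b) (hφz : φ z = y) :
    StrictAntiOn (fun x => |φ x - y|) (Icc a z) := by
  subst hφz
  intro x hx x' hx' hxx'
  show |φ x' - φ z| < |φ x - φ z|
  have hxJ : x ∈ Icc a b := ⟨hx.1, hx.2.trans hz.2⟩
  have hx'J : x' ∈ Icc a b := ⟨hx'.1, hx'.2.trans hz.2⟩
  rcases hφ with hφ | hφ
  · have hlt := hφ hxJ hx'J hxx'
    have hle := hφ.monotoneOn hx'J hz hx'.2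
    rw [abs_of_nonpos (by linarith), abs_of_nonpos (by linarith)]
    linarith
  · have hlt := hφ hxJ hx'J hxx'
    have hle := hφ.antitoneOn hx'J hz hx'.2
    rw [abs_of_nonneg (by linarith), abs_of_nonneg (by linarith)]
    linarith

theorem strictMonoOn_abs_sub_of_apply_eq
    (hφ : StrictMonoOn φ (Icc a b) ∨ StrictAntiOn φ (Icc a b)) (hz : z ∈ Icc a b) (hφz : φ z = y) :
    StrictMonoOn (fun x => |φ x - y|) (Icc z b) := by
  subst hφz
  intro x hx x' hx' hxx'
  show |φ x - φ z| < |φ x' - φ z|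
  have hxJ : x ∈ Icc a b := ⟨hz.1.trans hx.1, hx.2⟩
  have hx'J : x' ∈ Icc a b := ⟨hz.1.trans hx'.1, hx'.2⟩
  rcases hφ with hφ | hφ
  · have hlt := hφ hxJ hx'J hxx'
    have hle := hφ.monotoneOn hz hxJ hx.1
    rw [abs_of_nonneg (by linarith), abs_of_nonneg (by linarith)]
    linarith
  · have hlt := hφ hxJ hx'J hxx'
    have hle := hφ.antitoneOn hz hxJ hx.1
    rw [abs_of_nonpos (by linarith), abs_of_nonpos (by linarith)]
    linarith

end MonotoneAbs

theorem preimDist_le_abs_sub {f : ℝ → ℝ} {c x : ℝ} {k : ℕ} (hx : x ∈ Icc (0 : ℝ) 1)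
    (hxc : f^[k] x = c) : preimDist f c k ≤ |x - c| :=
  csInf_le ⟨0, by rintro _ ⟨_, _, rfl⟩; exact abs_nonneg _⟩ ⟨x, ⟨hx, hxc⟩, rfl⟩

theorem preimDist_nonneg {f : ℝ → ℝ} {c : ℝ} {k : ℕ} : 0 ≤ preimDist f c k :=
  Real.sInf_nonneg (by rintro _ ⟨_, _, rfl⟩; exact abs_nonneg _)

def IsNearestPullbackChain (f : ℝ → ℝ) (c q : ℝ) (u : ℕ → ℝ) : Prop :=
  u 1 = 2 * c - q ∧ ∀ n, 1 ≤ n →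
    f^[fibS n] (u (n + 1)) = u n ∧
    0 < (u (n + 1) - c) * (f^[fibS (n + 1)] c - c) ∧
    ∀ y ∈ Icc (0 : ℝ) 1, f^[fibS n] y = u n → |u (n + 1) - c| ≤ |y - c|

theorem IsNearestPullbackChain.abs_sub_one {f : ℝ → ℝ} {c q : ℝ} {u : ℕ → ℝ}
    (hu : IsNearestPullbackChain f c q u) (hq : c < q) : |u 1 - c| = q - c := by
  rw [hu.1, show 2 * c - q - c = -(q - c) by ring, abs_neg, abs_of_pos (sub_pos.2 hq)]

namespace IsFibonacciMap

variable {f : ℝ → ℝ} {c : ℝ}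

local notation "ρ" n:max => preimDist f c (fibS n)

theorem mapsTo_iterate (hf : IsFibonacciMap f c) (k : ℕ) :
    MapsTo f^[k] (Icc 0 1) (Icc 0 1) :=
  hf.1.2.1.iterate k

theorem continuousOn_iterate (hf : IsFibonacciMap f c) (k : ℕ) :
    ContinuousOn f^[k] (Icc 0 1) :=
  hf.1.1.iterate hf.1.2.1 k

theorem preimDist_fibS_succ_lt (hf : IsFibonacciMap f c) (n : ℕ) : ρ (n + 1) < ρ n :=
  (hf.2.2.2 n).1.2.2

theorem preimDist_fibS_strictAnti (hf : IsFibonacciMap f c) : StrictAnti fun n => ρ n :=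
  strictAnti_nat_of_succ_lt hf.preimDist_fibS_succ_lt

theorem preimDist_fibS_le_zero (hf : IsFibonacciMap f c) (n : ℕ) : ρ n ≤ ρ 0 :=
  hf.preimDist_fibS_strictAnti.antitone n.zero_le

theorem preimDist_fibS_pos (hf : IsFibonacciMap f c) (n : ℕ) : 0 < ρ n :=
  preimDist_nonneg.trans_lt (hf.preimDist_fibS_succ_lt n)

theorem exists_iterate_fibS_eq (hf : IsFibonacciMap f c) (n : ℕ) :
    ∃ x ∈ Icc (0 : ℝ) 1, f^[fibS n] x = c := by
  obtain ⟨x, hx, hxc⟩ := (hf.2.2.2 n).1.2.1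
  refine ⟨f^[fibS (n + 1) - fibS n] x, hf.mapsTo_iterate _ hx, ?_⟩
  rw [← iterate_add_apply, Nat.add_sub_cancel' (fibS_strictMono (Nat.lt_add_one n)).le, hxc]

theorem exists_abs_sub_eq_preimDist (hf : IsFibonacciMap f c) (n : ℕ) :
    ∃ x ∈ Icc (0 : ℝ) 1, f^[fibS n] x = c ∧ |x - c| = ρ n := by
  have hclosed : IsClosed (Icc 0 1 ∩ f^[fibS n] ⁻¹' {c}) :=
    (hf.continuousOn_iterate _).preimage_isClosed_of_isClosed isClosed_Icc isClosed_singleton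
  have hcompact : IsCompact {x | x ∈ Icc (0 : ℝ) 1 ∧ f^[fibS n] x = c} :=
    isCompact_Icc.of_isClosed_subset hclosed inter_subset_left
  obtain ⟨x, hx, hxc⟩ := hf.exists_iterate_fibS_eq n
  obtain ⟨y, ⟨hy, hyc⟩, hyρ⟩ :=
    (hcompact.image (continuous_id.sub continuous_const).abs).sInf_mem ⟨_, x, ⟨hx, hxc⟩, rfl⟩
  exact ⟨y, hy, hyc, hyρ⟩

theorem lt_apply_self (hf : IsFibonacciMap f c) : c < f c := by
  have ⟨⟨_, _, _, _, hc, hmono, hanti⟩, _⟩ := hf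
  obtain ⟨x, hx, hxc⟩ := hf.exists_iterate_fibS_eq 0
  change f x = c at hxc
  rcases lt_trichotomy x c with hlt | rfl | hgt
  · exact lt_of_eq_of_lt hxc.symm (hmono ⟨hx.1, hlt.le⟩ ⟨hc.1.le, le_rfl⟩ hlt)
  · have := preimDist_le_abs_sub (k := fibS 0) hx hxc
    rw [sub_self, abs_zero] at this
    exact absurd this (hf.preimDist_fibS_pos 0).not_ge
  · exact lt_of_eq_of_lt hxc.symm (hanti ⟨le_rfl, hc.2.le⟩ ⟨hgt.le, hx.2⟩ hgt)

theorem preimDist_fibS_zero_lt (hf : IsFibonacciMap f c) : ρ 0 < c ∧ ρ 0 < 1 - c := by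
  have ⟨⟨hcont, _, h0, h1, hc, _, _⟩, _⟩ := hf
  obtain ⟨y, hy, hyc⟩ :=
    intermediate_value_Ioo hc.1.le (hcont.mono (Icc_subset_Icc_right hc.2.le))
      (by rw [h0]; exact ⟨hc.1, hf.lt_apply_self⟩)
  obtain ⟨y', hy', hy'c⟩ :=
    intermediate_value_Ioo' hc.2.le (hcont.mono (Icc_subset_Icc_left hc.1.le))
      (by rw [h1]; exact ⟨hc.1, hf.lt_apply_self⟩)
  have hyρ := preimDist_le_abs_sub (k := fibS 0) ⟨hy.1.le, by linarith [hy.2, hc.2]⟩ hyc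
  have hy'ρ := preimDist_le_abs_sub (k := fibS 0) ⟨by linarith [hy'.1, hc.1], hy'.2.le⟩ hy'c
  rw [abs_of_neg (by linarith [hy.2])] at hyρ
  rw [abs_of_pos (by linarith [hy'.1])] at hy'ρ
  constructor <;> linarith [hy.1, hy'.2]

theorem mem_Icc_of_abs_sub_le (hf : IsFibonacciMap f c) {x : ℝ} (hx : |x - c| ≤ ρ 0) :
    x ∈ Icc (0 : ℝ) 1 := by
  have := hf.preimDist_fibS_zero_lt
  constructor <;> linarith [abs_le.1 hx]

theorem Icc_add_preimDist_subset (hf : IsFibonacciMap f c) (n : ℕ) :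
    Icc c (c + ρ n) ⊆ Icc c 1 :=
  Icc_subset_Icc_right (by linarith [hf.preimDist_fibS_zero_lt, hf.preimDist_fibS_le_zero n])

theorem Icc_add_preimDist_subset_Icc_zero_one (hf : IsFibonacciMap f c) (n : ℕ) :
    Icc c (c + ρ n) ⊆ Icc 0 1 :=
  (hf.Icc_add_preimDist_subset n).trans (Icc_subset_Icc_left hf.1.2.2.2.2.1.1.le)

theorem add_preimDist_mem_Icc_zero_one (hf : IsFibonacciMap f c) (n : ℕ) :
    c + ρ n ∈ Icc (0 : ℝ) 1 :=
  hf.Icc_add_preimDist_subset_Icc_zero_one n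
    (right_mem_Icc.2 (le_add_of_nonneg_right preimDist_nonneg))

theorem iterate_add_eq_iterate_sub (hf : IsFibonacciMap f c) {t : ℝ} (ht : |t| ≤ ρ 0) {k : ℕ}
    (hk : k ≠ 0) : f^[k] (c + t) = f^[k] (c - t) := by
  obtain ⟨j, rfl⟩ := Nat.exists_eq_succ_of_ne_zero hk
  have hmem : ∀ s, |s| ≤ ρ 0 → c + s ∈ Icc (0 : ℝ) 1 := fun s hs =>
    hf.mem_Icc_of_abs_sub_le (by rwa [add_sub_cancel_left])
  rw [iterate_succ_apply, iterate_succ_apply, ← hf.2.1 (c + t) (hmem t ht)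
    (by rw [show 2 * c - (c + t) = c + -t by ring]; exact hmem _ (by rwa [abs_neg])),
    show 2 * c - (c + t) = c - t by ring]

theorem iterate_add_abs_sub (hf : IsFibonacciMap f c) {x : ℝ} (hx : |x - c| ≤ ρ 0) {k : ℕ}
    (hk : k ≠ 0) : f^[k] (c + |x - c|) = f^[k] x := by
  rcases abs_cases (x - c) with ⟨h, -⟩ | ⟨h, -⟩
  · rw [h, add_sub_cancel]
  · rw [hf.iterate_add_eq_iterate_sub (by rwa [abs_abs]) hk, h, sub_neg_eq_add, add_sub_cancel]

theorem iterate_fibS_add_preimDist (hf : IsFibonacciMap f c) (n : ℕ) :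
    f^[fibS n] (c + ρ n) = c ∧ f^[fibS n] (c - ρ n) = c := by
  obtain ⟨x, -, hxc, hxρ⟩ := hf.exists_abs_sub_eq_preimDist n
  have hadd : f^[fibS n] (c + ρ n) = c := by
    rw [← hxρ, hf.iterate_add_abs_sub (hxρ ▸ hf.preimDist_fibS_le_zero n) (fibS_pos n).ne', hxc]
  refine ⟨hadd, ?_⟩
  rwa [← hf.iterate_add_eq_iterate_sub _ (fibS_pos n).ne']
  rw [abs_of_pos (hf.preimDist_fibS_pos n)]
  exact hf.preimDist_fibS_le_zero n

theorem preimDist_fibS_le_abs_sub (hf : IsFibonacciMap f c) :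
    ∀ n {j : ℕ} {x : ℝ}, 1 ≤ j → j < fibS (n + 1) → x ∈ Icc (0 : ℝ) 1 → f^[j] x = c →
      ρ n ≤ |x - c|
  | 0, j, x, hj, hjS, hx, hxc => by
    obtain rfl : j = 1 := by change j < 2 at hjS; omega
    exact preimDist_le_abs_sub hx hxc
  | n + 1, j, x, hj, hjS, hx, hxc => by
    rcases lt_or_ge j (fibS (n + 1)) with hlt | hge
    · exact (hf.preimDist_fibS_succ_lt n).le.trans (hf.preimDist_fibS_le_abs_sub n hj hlt hx hxc)
    · have hmin : ¬ preimDist f c j < ρ (n + 1) := fun hlt =>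
        ((hf.2.2.2 (n + 1)).2 ⟨hge, ⟨x, hx, hxc⟩, hlt⟩).not_gt hjS
      exact (not_lt.1 hmin).trans (preimDist_le_abs_sub hx hxc)

theorem injOn_iterate (hf : IsFibonacciMap f c) (n : ℕ) {j : ℕ} (hj : 1 ≤ j)
    (hjS : j ≤ fibS (n + 1)) : InjOn f^[j] (Icc c (c + ρ n)) := by
  have ⟨⟨_, _, _, _, _, hmono, hanti⟩, _⟩ := hf
  have hJ : Icc c (c + ρ n) ⊆ Icc c 1 := hf.Icc_add_preimDist_subset n
  have hJ' : Icc c (c + ρ n) ⊆ Icc 0 1 := hf.Icc_add_preimDist_subset_Icc_zero_one n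
  induction j, hj using Nat.le_induction with
  | base => exact hanti.injOn.mono hJ
  | succ j hj ih =>
    have hreturn : ∀ x ∈ Icc c (c + ρ n), f^[j] x = c → x = c + ρ n := fun x hx hxc => by
      have := hf.preimDist_fibS_le_abs_sub n hj (by omega) (hJ' hx) hxc
      rw [abs_of_nonneg (sub_nonneg.2 hx.1)] at this
      exact le_antisymm hx.2 (by linarith)
    rw [iterate_succ']
    rcases ((hf.continuousOn_iterate j).mono hJ').mapsTo_Iic_or_Ici hreturn with hle | hge
    · exact hmono.injOn.comp (ih (by omega))
        fun x hx => ⟨(hf.mapsTo_iterate j (hJ' hx)).1, hle hx⟩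
    · exact hanti.injOn.comp (ih (by omega))
        fun x hx => ⟨hge hx, (hf.mapsTo_iterate j (hJ' hx)).2⟩

theorem strictMonoOn_or_strictAntiOn_iterate (hf : IsFibonacciMap f c) (n : ℕ) :
    StrictMonoOn f^[fibS (n + 1)] (Icc c (c + ρ n)) ∨
      StrictAntiOn f^[fibS (n + 1)] (Icc c (c + ρ n)) :=
  ContinuousOn.strictMonoOn_of_injOn_Icc' (by linarith [hf.preimDist_fibS_pos n])
    ((hf.continuousOn_iterate _).mono (hf.Icc_add_preimDist_subset_Icc_zero_one n))
    (hf.injOn_iterate n (fibS_pos _) le_rfl)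

theorem strictAntiOn_abs_iterate_sub (hf : IsFibonacciMap f c) (n : ℕ) :
    StrictAntiOn (fun x => |f^[fibS (n + 1)] x - c|) (Icc c (c + ρ (n + 1))) :=
  strictAntiOn_abs_sub_of_apply_eq (hf.strictMonoOn_or_strictAntiOn_iterate n)
    ⟨by linarith [hf.preimDist_fibS_pos (n + 1)], by linarith [hf.preimDist_fibS_succ_lt n]⟩
    (hf.iterate_fibS_add_preimDist (n + 1)).1

theorem strictMonoOn_abs_iterate_sub (hf : IsFibonacciMap f c) (n : ℕ) :
    StrictMonoOn (fun x => |f^[fibS (n + 1)] x - c|) (Icc (c + ρ (n + 1)) (c + ρ n)) :=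
  strictMonoOn_abs_sub_of_apply_eq (hf.strictMonoOn_or_strictAntiOn_iterate n)
    ⟨by linarith [hf.preimDist_fibS_pos (n + 1)], by linarith [hf.preimDist_fibS_succ_lt n]⟩
    (hf.iterate_fibS_add_preimDist (n + 1)).1

theorem preimDist_lt_abs_iterate_fibS_succ (hf : IsFibonacciMap f c) (n : ℕ) :
    ρ n < |f^[fibS (n + 1)] c - c| := by
  have hpos := hf.preimDist_fibS_pos (n + 2)
  have hlt := hf.preimDist_fibS_succ_lt (n + 1)
  have hw : ρ n ≤ |f^[fibS (n + 1)] (c + ρ (n + 2)) - c| :=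
    preimDist_le_abs_sub (hf.mapsTo_iterate _ (hf.add_preimDist_mem_Icc_zero_one _))
      (by rw [iterate_fibS_iterate_fibS_succ]; exact (hf.iterate_fibS_add_preimDist _).1)
  have := hf.strictAntiOn_abs_iterate_sub n (left_mem_Icc.2 (by linarith))
    ⟨by linarith, by linarith⟩ (by linarith : c < c + ρ (n + 2))
  exact hw.trans_lt this

theorem exists_mem_Icc_iterate_fibS_eq (hf : IsFibonacciMap f c) (n : ℕ) {z : ℝ}
    (hz : z ∈ uIcc c (f^[fibS n] c)) : ∃ y ∈ Icc c (c + ρ n), f^[fibS n] y = z := by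
  have hle : c ≤ c + ρ n := by linarith [hf.preimDist_fibS_pos n]
  have hcont : ContinuousOn f^[fibS n] (uIcc c (c + ρ n)) :=
    (hf.continuousOn_iterate _).mono (uIcc_of_le hle ▸ hf.Icc_add_preimDist_subset_Icc_zero_one n)
  obtain ⟨y, hy, hyz⟩ := intermediate_value_uIcc hcont
    (by rwa [(hf.iterate_fibS_add_preimDist n).1, uIcc_comm])
  exact ⟨y, by rwa [uIcc_of_le hle] at hy, hyz⟩

theorem abs_iterate_fibS_add_two_lt (hf : IsFibonacciMap f c) (n : ℕ) :
    |f^[fibS (n + 2)] c - c| < ρ n := by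
  by_contra! h
  have hpos := hf.preimDist_fibS_pos n
  obtain ⟨z, hz, hzc, hcz⟩ : ∃ z ∈ uIcc c (f^[fibS (n + 2)] c), f^[fibS n] z = c ∧ c ≠ z := by
    rcases le_total c (f^[fibS (n + 2)] c) with hcd | hdc
    · rw [abs_of_nonneg (sub_nonneg.2 hcd)] at h
      exact ⟨c + ρ n, mem_uIcc_of_le (by linarith) (by linarith),
        (hf.iterate_fibS_add_preimDist n).1, by linarith⟩
    · rw [abs_of_nonpos (sub_nonpos.2 hdc)] at h
      exact ⟨c - ρ n, mem_uIcc_of_ge (by linarith) (by linarith),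
        (hf.iterate_fibS_add_preimDist n).2, by linarith⟩
  obtain ⟨y, hy, hyz⟩ := hf.exists_mem_Icc_iterate_fibS_eq (n + 2) hz
  -- `y` is an `(S n + S (n+2))`-th preimage of `c`, and `S n + S (n+2) < S (n+3)`
  have hfar := hf.preimDist_fibS_le_abs_sub (n + 2) (j := fibS n + fibS (n + 2))
    (by have := fibS_pos n; omega)
    (by have := fibS_strictMono (Nat.lt_add_one n); change _ < fibS (n + 2) + fibS (n + 1); omega)
    (hf.Icc_add_preimDist_subset_Icc_zero_one _ hy)
    (by rw [iterate_add_apply, hyz, hzc])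
  rw [abs_of_nonneg (sub_nonneg.2 hy.1)] at hfar
  obtain rfl : y = c + ρ (n + 2) := le_antisymm hy.2 (by linarith)
  exact hcz ((hf.iterate_fibS_add_preimDist _).1.symm.trans hyz)

theorem iterate_fibS_one_lt (hf : IsFibonacciMap f c) : f^[fibS 1] c < c := by
  have h₀ : f^[fibS 1] (c + ρ 0) = f c := congrArg f (hf.iterate_fibS_add_preimDist 0).1
  have hpos := hf.preimDist_fibS_pos 1
  have hlt := hf.preimDist_fibS_succ_lt 0
  rcases hf.strictMonoOn_or_strictAntiOn_iterate 0 with hmono | hanti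
  · have := hmono (left_mem_Icc.2 (by linarith)) ⟨by linarith, by linarith⟩
      (by linarith : c < c + ρ 1)
    rwa [(hf.iterate_fibS_add_preimDist 1).1] at this
  · have := hanti ⟨by linarith, by linarith⟩ (right_mem_Icc.2 (by linarith))
      (by linarith : c + ρ 1 < c + ρ 0)
    rw [(hf.iterate_fibS_add_preimDist 1).1, h₀] at this
    exact absurd this hf.lt_apply_self.not_gt

theorem fixedPt_sub_lt_preimDist (hf : IsFibonacciMap f c) {q : ℝ} (hq : f q = q)
    (hqI : q ∈ Ioo c 1) : q - c < ρ 0 := by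
  by_contra! h
  have ⟨⟨_, _, _, _, _, _, hanti⟩, _⟩ := hf
  have := hanti.antitoneOn (hf.Icc_add_preimDist_subset 0
      (right_mem_Icc.2 (le_add_of_nonneg_right preimDist_nonneg)))
    ⟨hqI.1.le, hqI.2.le⟩ (by linarith : c + ρ 0 ≤ q)
  have h₀ : f (c + ρ 0) = c := (hf.iterate_fibS_add_preimDist 0).1
  rw [hq, h₀] at this
  linarith [hqI.1]

theorem preimDist_lt_fixedPt_sub (hf : IsFibonacciMap f c) {q : ℝ} (hq : f q = q)
    (hqI : q ∈ Ioo c 1) : ρ 1 < q - c := by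
  by_contra! h
  have ⟨⟨_, _, _, _, _, _, hanti⟩, _⟩ := hf
  have hlt : ρ 1 < ρ 0 := hf.preimDist_fibS_succ_lt 0
  have hmem : c + ρ 1 ∈ Icc c 1 :=
    hf.Icc_add_preimDist_subset 1 (right_mem_Icc.2 (le_add_of_nonneg_right preimDist_nonneg))
  -- otherwise `f (c + ρ 1) ∈ [c, q]` is an `S 0`-th preimage of `c` closer than `ρ 0`
  have hw : ρ 0 ≤ |f (c + ρ 1) - c| :=
    preimDist_le_abs_sub (k := fibS 0) (hf.1.2.1 (hf.add_preimDist_mem_Icc_zero_one 1))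
      (hf.iterate_fibS_add_preimDist 1).1
  have hc : c ≤ f (c + ρ 1) := by
    have h₀ : f (c + ρ 0) = c := (hf.iterate_fibS_add_preimDist 0).1
    have := hanti.antitoneOn hmem (hf.Icc_add_preimDist_subset 0
      (right_mem_Icc.2 (le_add_of_nonneg_right preimDist_nonneg))) (by linarith : c + ρ 1 ≤ c + ρ 0)
    rwa [h₀] at this
  have hq' : f (c + ρ 1) ≤ q := by
    have := hanti.antitoneOn ⟨hqI.1.le, hqI.2.le⟩ hmem (by linarith : q ≤ c + ρ 1)
    rwa [hq] at this
  rw [abs_of_nonneg (by linarith)] at hw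
  linarith [hf.fixedPt_sub_lt_preimDist hq hqI]

theorem preimDist_lt_abs_sub_of_abs_iterate_lt (hf : IsFibonacciMap f c) (n : ℕ) {x : ℝ}
    (h : |f^[fibS (n + 1)] x - c| < ρ n) : ρ (n + 2) < |x - c| := by
  by_contra! hx
  have hpos := hf.preimDist_fibS_pos (n + 2)
  have hlt := hf.preimDist_fibS_succ_lt (n + 1)
  have hw : ρ n ≤ |f^[fibS (n + 1)] (c + ρ (n + 2)) - c| :=
    preimDist_le_abs_sub (hf.mapsTo_iterate _ (hf.add_preimDist_mem_Icc_zero_one _))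
      (by rw [iterate_fibS_iterate_fibS_succ]; exact (hf.iterate_fibS_add_preimDist _).1)
  have := (hf.strictAntiOn_abs_iterate_sub n).antitoneOn
    ⟨by linarith [abs_nonneg (x - c)], by linarith⟩ ⟨by linarith, by linarith⟩
    (by linarith : c + |x - c| ≤ c + ρ (n + 2))
  rw [hf.iterate_add_abs_sub (hx.trans (hf.preimDist_fibS_le_zero _)) (fibS_pos _).ne'] at this
  linarith

theorem exists_mem_Ico_iterate_fibS_succ_eq (hf : IsFibonacciMap f c) (n : ℕ) {z : ℝ}
    (hside : 0 < (z - c) * (f^[fibS (n + 1)] c - c)) (hz : |z - c| ≤ ρ n) :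
    ∃ y ∈ Ico c (c + ρ (n + 1)), f^[fibS (n + 1)] y = z := by
  obtain ⟨y, hy, hyz⟩ := hf.exists_mem_Icc_iterate_fibS_eq (n + 1)
    (mem_uIcc_of_mul_pos_of_abs_sub_le hside
      (hz.trans (hf.preimDist_lt_abs_iterate_fibS_succ n).le))
  refine ⟨y, ⟨hy.1, hy.2.lt_of_ne ?_⟩, hyz⟩
  rintro rfl
  rw [(hf.iterate_fibS_add_preimDist _).1] at hyz
  subst hyz
  simp at hside

theorem abs_iterate_fibS_add_two_lt_abs_sub (hf : IsFibonacciMap f c) (n : ℕ) {x : ℝ}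
    (hx : ρ (n + 1) ≤ |x - c|) (hfx : ρ (n + 1) < |f^[fibS (n + 1)] x - c|) :
    |f^[fibS (n + 2)] c - c| < |x - c| := by
  by_contra! hxd
  have hd := hf.abs_iterate_fibS_add_two_lt n
  have := (hf.strictMonoOn_abs_iterate_sub n).monotoneOn
    ⟨by linarith, by linarith⟩ ⟨by linarith, by linarith⟩
    (by linarith : c + |x - c| ≤ c + |f^[fibS (n + 2)] c - c|)
  have hρ := hf.preimDist_fibS_le_zero n
  rw [hf.iterate_add_abs_sub (by linarith) (fibS_pos _).ne',
    hf.iterate_add_abs_sub (by linarith) (fibS_pos _).ne', iterate_fibS_iterate_fibS_succ] at this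
  linarith [hf.abs_iterate_fibS_add_two_lt (n + 1)]

theorem sub_mul_iterate_fibS_sub_pos (hf : IsFibonacciMap f c) {q : ℝ} {u : ℕ → ℝ}
    (hqI : q ∈ Ioo c 1) (hu : IsNearestPullbackChain f c q u) {m : ℕ} (hm : 1 ≤ m) :
    0 < (u m - c) * (f^[fibS m] c - c) := by
  obtain rfl | hm := hm.eq_or_lt
  · rw [hu.1]
    exact mul_pos_of_neg_of_neg (by linarith [hqI.1]) (sub_neg.2 hf.iterate_fibS_one_lt)
  · obtain ⟨k, rfl⟩ : ∃ k, m = k + 2 := ⟨m - 2, by omega⟩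
    exact (hu.2 (k + 1) (by omega)).2.1

theorem preimDist_lt_abs_sub_lt_preimDist (hf : IsFibonacciMap f c) {q : ℝ} {u : ℕ → ℝ}
    (hq : f q = q) (hqI : q ∈ Ioo c 1) (hu : IsNearestPullbackChain f c q u) :
    ∀ p, ρ (p + 1) < |u (p + 1) - c| ∧ |u (p + 1) - c| < ρ p
  | 0 => hu.abs_sub_one hqI.1 ▸
    ⟨hf.preimDist_lt_fixedPt_sub hq hqI, hf.fixedPt_sub_lt_preimDist hq hqI⟩
  | p + 1 => by
    obtain ⟨-, hhi⟩ := hf.preimDist_lt_abs_sub_lt_preimDist hq hqI hu p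
    obtain ⟨hval, -, hnear⟩ := hu.2 (p + 1) (by omega)
    refine ⟨hf.preimDist_lt_abs_sub_of_abs_iterate_lt p (hval ▸ hhi), ?_⟩
    obtain ⟨y, hy, hyu⟩ := hf.exists_mem_Ico_iterate_fibS_succ_eq p
      (hf.sub_mul_iterate_fibS_sub_pos hqI hu (by omega)) hhi.le
    calc |u (p + 2) - c| ≤ |y - c| :=
          hnear y (hf.Icc_add_preimDist_subset_Icc_zero_one _ (Ico_subset_Icc_self hy)) hyu
      _ = y - c := abs_of_nonneg (sub_nonneg.2 hy.1)
      _ < ρ (p + 1) := by linarith [hy.2]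

theorem preimDist_lt_abs_iterate_sub (hf : IsFibonacciMap f c) {q : ℝ} {u : ℕ → ℝ}
    (hq : f q = q) (hqI : q ∈ Ioo c 1) (hu : IsNearestPullbackChain f c q u) (m : ℕ) :
    ρ (m + 1) < |f^[fibS (m + 1)] (u (m + 1)) - c| := by
  have hqρ := hf.preimDist_lt_fixedPt_sub hq hqI
  have hfu : f (u 1) = q := by
    have hu₁ : |u 1 - c| ≤ ρ 0 := (hu.abs_sub_one hqI.1).trans_lt
      (hf.fixedPt_sub_lt_preimDist hq hqI) |>.le
    have hq₀ : q ∈ Icc (0 : ℝ) 1 := hf.mem_Icc_of_abs_sub_le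
      (by rwa [abs_of_pos (sub_pos.2 hqI.1), ← hu.abs_sub_one hqI.1])
    rw [hu.1, hf.2.1 q hq₀ (hu.1 ▸ hf.mem_Icc_of_abs_sub_le hu₁), hq]
  -- `f^[S (m+1)] (u (m+1))` is `q` for `m ≤ 1` and `u (m-1)` otherwise
  match m with
  | 0 =>
    change ρ 1 < |f (f (u 1)) - c|
    rwa [hfu, hq, abs_of_pos (sub_pos.2 hqI.1)]
  | 1 =>
    rw [← iterate_fibS_iterate_fibS_succ f 0, (hu.2 1 le_rfl).1]
    change ρ 2 < |f (u 1) - c|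
    rw [hfu, abs_of_pos (sub_pos.2 hqI.1)]
    exact (hf.preimDist_fibS_succ_lt 1).trans hqρ
  | m + 2 =>
    rw [← iterate_fibS_iterate_fibS_succ f (m + 1), (hu.2 (m + 2) (by omega)).1,
      (hu.2 (m + 1) (by omega)).1]
    exact (hf.preimDist_fibS_strictAnti (by omega : m + 1 < m + 3)).trans
      (hf.preimDist_lt_abs_sub_lt_preimDist hq hqI hu m).1

end IsFibonacciMap

/-- For a Fibonacci map, for every `n ≥ 2` the point `d_n = f^{S_n}(c)` lies in
`U^{n-1}` but not in `U^n` (where `U^n` is the open interval with endpoints `u_n`, `û_n`);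
equivalently `|u_n| < |d_n| < |u_{n-1}|`. -/
theorem fibonacci_d_between_u_levels (f : ℝ → ℝ) (c q : ℝ) (u : ℕ → ℝ)
    (hf : IsFibonacciMap f c)
    (hq : f q = q) (hqI : q ∈ Set.Ioo c 1)
    (hu1 : u 1 = 2 * c - q)
    (hu : ∀ n, 1 ≤ n →
      u (n + 1) ∈ Set.Icc (0 : ℝ) 1 ∧
      f^[fibS n] (u (n + 1)) = u n ∧
      (u (n + 1) - c) * (f^[fibS (n + 1)] c - c) > 0 ∧
      ∀ y ∈ Set.Icc (0 : ℝ) 1, f^[fibS n] y = u n → |u (n + 1) - c| ≤ |y - c|) :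
    ∀ n, 2 ≤ n →
      f^[fibS n] c ∈ Set.uIoo (u (n - 1)) (2 * c - u (n - 1)) ∧
      f^[fibS n] c ∉ Set.uIoo (u n) (2 * c - u n) ∧
      |u n - c| < |f^[fibS n] c - c| ∧
      |f^[fibS n] c - c| < |u (n - 1) - c| := by
  have hchain : IsNearestPullbackChain f c q u := ⟨hu1, fun n hn => (hu n hn).2⟩
  intro n hn
  obtain ⟨m, rfl⟩ : ∃ m, n = m + 2 := ⟨n - 2, by omega⟩
  have hlow : |u (m + 2) - c| < |f^[fibS (m + 2)] c - c| :=
    (hf.preimDist_lt_abs_sub_lt_preimDist hq hqI hchain (m + 1)).2.trans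
      (hf.preimDist_lt_abs_iterate_fibS_succ (m + 1))
  have hup : |f^[fibS (m + 2)] c - c| < |u (m + 1) - c| :=
    hf.abs_iterate_fibS_add_two_lt_abs_sub m
      (hf.preimDist_lt_abs_sub_lt_preimDist hq hqI hchain m).1.le
      (hf.preimDist_lt_abs_iterate_sub hq hqI hchain m)
  rw [show m + 2 - 1 = m + 1 from rfl, mem_uIoo_two_mul_sub_iff, mem_uIoo_two_mul_sub_iff]
  exact ⟨hup, hlow.not_gt, hlow, hup⟩
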